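/- arXiv:1909.02139 — 3 statements merged into one kernel-verified Lean document; each statement's English description precedes it below -/
import Mathlib

section
/- (Consistency of the sample variance in each true spike direction.) Under the spiked mixture model with Assumptions (A1)–(A4), assume additionally that τ_{k,1}^{(n)}/τ_{k,2}^{(n)} → 0 for every k ∈ I_out. Then for every spike index k ∈ {1,…,K}, the quadratic form of the sample covariance matrix in the true direction U_k^{(n)} is ratio-consistent: (1/λ_k^{(n)}) ⟨U_k^{(n)}, Σ̂^{(n)} U_k^{(n)}⟩ = (1/(n λ_k^{(n)})) Σ_{j=1}^{n} (y_{kj}^{(n)})² → 1 almost surely as n → ∞; equivalently, (1/λ_k^{(n)}) Σ_{i=1}^{d(n)} λ̂_i^{(n)} ⟨U_k^{(n)}, Û_i^{(n)}⟩² → 1 almost surely. -/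
open MeasureTheory ProbabilityTheory Filter Finset Asymptotics ENNReal
open scoped Topology

/-!
Write `E_j = 1{B_{kj}}`, so that `y_{kj}² = τ_{k,2} E_j z_{kj}² + τ_{k,1} (1 - E_j) z_{kj}²`.
The pairs `(z_{kj}, E_j)` are i.i.d., so by the strong law `n⁻¹ Σ_j z_{kj}² → 1` and
`n⁻¹ Σ_j E_j z_{kj}² → 𝔼[E_j] 𝔼[z_{kj}²] = w_k` almost surely. If `w_k > 0`, then
`λ_k = w_k τ_{k,2}` and the `τ_{k,1}` part is negligible since `τ_{k,1}/τ_{k,2} → 0`; if `w_k = 0`,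
then almost surely every `E_j` vanishes and `λ_k = τ_{k,1}`.

The other two quantities are the same number: orthonormality of the `U_i` gives
`⟨U_k, X_j⟩ = y_{kj}`, hence `⟨U_k, Σ̂ U_k⟩ = n⁻¹ Σ_j y_{kj}²` as soon as `k ≤ d`, and expanding
`U_k` in the orthonormal eigenbasis `Û_i` gives `⟨U_k, Σ̂ U_k⟩ = Σ_i λ̂_i ⟨U_k, Û_i⟩²`.
-/

/-- `a ≻ b`: the ratio `a n / b n` tends to a limit in `(1, ∞]`. -/
def SuccSeq (a b : ℕ → ℝ) : Prop :=
  (∃ L : ℝ, 1 < L ∧ Filter.Tendsto (fun n => a n / b n) Filter.atTop (nhds L)) ∨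
    Filter.Tendsto (fun n => a n / b n) Filter.atTop Filter.atTop

theorem Finset.sum_sum_mul_sum_mul_mul_eq_sum_sq {ι κ R : Type*} [CommSemiring R] (s : Finset ι)
    (u : ι → R) (x : κ → ι → R) (t : Finset κ) :
    ∑ a ∈ s, ∑ b ∈ s, u a * (∑ j ∈ t, x j a * x j b) * u b =
      ∑ j ∈ t, (∑ a ∈ s, u a * x j a) ^ 2 := by
  simp_rw [sq, sum_mul_sum, mul_sum, sum_mul]
  rw [sum_congr rfl fun a _ => sum_comm, sum_comm]
  exact sum_congr rfl fun j _ => sum_congr rfl fun a _ => sum_congr rfl fun b _ => by ring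

section OrthonormalRows

variable {ι κ R : Type*} [DecidableEq ι] [CommRing R] {s : Finset ι} {U : ι → ι → R}

def RowsOrthonormalOn (s : Finset ι) (U : ι → ι → R) : Prop :=
  ∀ i ∈ s, ∀ j ∈ s, ∑ a ∈ s, U i a * U j a = if i = j then 1 else 0

theorem RowsOrthonormalOn.transpose (hU : RowsOrthonormalOn s U) :
    RowsOrthonormalOn s fun a i => U i a := by
  let V : Matrix s s R := Matrix.of fun i a => U i a
  have hV : V * V.transpose = 1 := by
    ext i j
    rw [Matrix.mul_apply, Matrix.one_apply]
    simp only [Matrix.transpose_apply, V, Matrix.of_apply]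
    rw [sum_coe_sort s (fun a => U i a * U j a), hU i i.2 j j.2]
    exact if_congr Subtype.ext_iff.symm rfl rfl
  have hV' : V.transpose * V = 1 := mul_eq_one_comm.mp hV
  intro a ha b hb
  have h := congrFun₂ hV' ⟨a, ha⟩ ⟨b, hb⟩
  rw [Matrix.mul_apply, Matrix.one_apply] at h
  simp only [Matrix.transpose_apply, V, Matrix.of_apply] at h
  rw [sum_coe_sort s (fun i => U i a * U i b)] at h
  change ∑ i ∈ s, U i a * U i b = _
  rw [h]
  exact if_congr Subtype.ext_iff rfl rfl

theorem RowsOrthonormalOn.sum_mul_sum_mul (hU : RowsOrthonormalOn s U) {k : ι} (hk : k ∈ s)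
    (c : ι → R) : ∑ i ∈ s, c i * ∑ a ∈ s, U i a * U k a = c k := by
  rw [sum_congr rfl fun i hi => by rw [hU i hi k hk]]
  simp [hk]

theorem RowsOrthonormalOn.sum_row_mul_sum_mul (hU : RowsOrthonormalOn s U) {k : ι} (hk : k ∈ s)
    (c : ι → R) : ∑ a ∈ s, U k a * ∑ i ∈ s, c i * U i a = c k := by
  rw [← hU.sum_mul_sum_mul hk c]
  simp_rw [mul_sum]
  rw [sum_comm]
  exact sum_congr rfl fun i _ => sum_congr rfl fun a _ => by ring

theorem RowsOrthonormalOn.sum_sum_mul_mul_eq_mul_sum_sq (hU : RowsOrthonormalOn s U) {k : ι}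
    (hk : k ∈ s) (y : ι → κ → R) (t : Finset κ) (r : R) :
    ∑ a ∈ s, ∑ b ∈ s, U k a *
        (r * ∑ j ∈ t, (∑ i ∈ s, y i j * U i a) * ∑ i ∈ s, y i j * U i b) * U k b =
      r * ∑ j ∈ t, y k j ^ 2 := by
  calc _ = r * ∑ a ∈ s, ∑ b ∈ s, U k a *
        (∑ j ∈ t, (∑ i ∈ s, y i j * U i a) * ∑ i ∈ s, y i j * U i b) * U k b := by
        rw [mul_sum]
        refine sum_congr rfl fun a _ => ?_
        rw [mul_sum]
        exact sum_congr rfl fun b _ => by ring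
    _ = r * ∑ j ∈ t, y k j ^ 2 := by
        rw [sum_sum_mul_sum_mul_mul_eq_sum_sq]
        simp_rw [hU.sum_row_mul_sum_mul hk]

theorem RowsOrthonormalOn.sum_eigenvalue_mul_sq (hV : RowsOrthonormalOn s U) {S : ι → ι → R}
    {μ : ι → R} (heig : ∀ i ∈ s, ∀ a ∈ s, ∑ b ∈ s, S a b * U i b = μ i * U i a) (u : ι → R) :
    ∑ i ∈ s, μ i * (∑ a ∈ s, u a * U i a) ^ 2 = ∑ a ∈ s, ∑ b ∈ s, u a * S a b * u b := by
  obtain ⟨c, hc⟩ : ∃ c : ι → R, ∀ i, ∑ a ∈ s, u a * U i a = c i := ⟨_, fun _ => rfl⟩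
  have hexpand : ∀ b ∈ s, ∑ i ∈ s, c i * U i b = u b := by
    intro b hb
    rw [← hV.transpose.sum_mul_sum_mul hb u]
    simp_rw [← hc, sum_mul, mul_sum]
    rw [sum_comm]
    exact sum_congr rfl fun a _ => sum_congr rfl fun i _ => by ring
  simp_rw [hc]
  calc ∑ i ∈ s, μ i * c i ^ 2
      = ∑ i ∈ s, ∑ a ∈ s, u a * (c i * (μ i * U i a)) := by
        refine sum_congr rfl fun i _ => ?_
        have h : ∑ a ∈ s, u a * (c i * (μ i * U i a)) = c i * μ i * ∑ a ∈ s, u a * U i a := by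
          rw [mul_sum]
          exact sum_congr rfl fun a _ => by ring
        rw [h, hc]
        ring
    _ = ∑ a ∈ s, ∑ i ∈ s, u a * (c i * ∑ b ∈ s, S a b * U i b) := by
        rw [sum_comm]
        exact sum_congr rfl fun a ha => sum_congr rfl fun i hi => by rw [heig i hi a ha]
    _ = ∑ a ∈ s, ∑ b ∈ s, u a * S a b * ∑ i ∈ s, c i * U i b := by
        refine sum_congr rfl fun a _ => ?_
        simp_rw [mul_sum]
        rw [sum_comm]
        exact sum_congr rfl fun b _ => sum_congr rfl fun i _ => by ring
    _ = ∑ a ∈ s, ∑ b ∈ s, u a * S a b * u b :=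
        sum_congr rfl fun a _ => sum_congr rfl fun b hb => by rw [hexpand b hb]

end OrthonormalRows

theorem tendsto_mixture_div {A S τ1 τ2 : ℕ → ℝ} {w : ℝ} (hw : w ≠ 0) (hτ2 : ∀ n, τ2 n ≠ 0)
    (hA : Tendsto (fun n => A n / n) atTop (𝓝 w)) (hS : Tendsto (fun n => S n / n) atTop (𝓝 1))
    (hτ : Tendsto (fun n => τ1 n / τ2 n) atTop (𝓝 0)) :
    Tendsto (fun n => (τ2 n * A n + τ1 n * (S n - A n)) / (n * (w * τ2 n))) atTop (𝓝 1) := by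
  have hlim := (hA.div_const w).add (hτ.mul ((hS.sub hA).div_const w))
  rw [div_self hw, zero_mul, add_zero] at hlim
  refine hlim.congr' ?_
  filter_upwards [eventually_ne_atTop 0] with n hn
  field_simp [Nat.cast_ne_zero.mpr hn, hτ2 n]

theorem ProbabilityTheory.identDistrib_of_measure_eq_true {Ω Ω' : Type*} [MeasurableSpace Ω]
    [MeasurableSpace Ω'] {μ : Measure Ω} {ν : Measure Ω'} [IsProbabilityMeasure μ]
    [IsProbabilityMeasure ν] {B : Ω → Bool} {B' : Ω' → Bool} (hB : Measurable B)
    (hB' : Measurable B') (h : μ {ω | B ω = true} = ν {ω | B' ω = true}) :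
    IdentDistrib B B' μ ν := by
  refine ⟨hB.aemeasurable, hB'.aemeasurable, Measure.ext_iff_singleton.mpr ?_⟩
  have htrue : μ (B ⁻¹' {true}) = ν (B' ⁻¹' {true}) := h
  rintro (_ | _)
  · rw [Measure.map_apply hB (measurableSet_singleton _),
      Measure.map_apply hB' (measurableSet_singleton _),
      show ({false} : Set Bool) = {true}ᶜ by ext; simp, Set.preimage_compl, Set.preimage_compl,
      prob_compl_eq_one_sub (hB (measurableSet_singleton _)),
      prob_compl_eq_one_sub (hB' (measurableSet_singleton _)), htrue]
  · rwa [Measure.map_apply hB (measurableSet_singleton _),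
      Measure.map_apply hB' (measurableSet_singleton _)]

theorem ProbabilityTheory.ae_tendsto_sum_Icc_div_of_iIndepFun_sum_elim {Ω : Type*}
    [MeasurableSpace Ω] {μ : Measure Ω} [IsFiniteMeasure μ] {Z E : ℕ → Ω → ℝ}
    (hZ : ∀ j, Measurable (Z j)) (hE : ∀ j, Measurable (E j)) (hind : iIndepFun (Sum.elim Z E) μ)
    (hZid : ∀ i j, IdentDistrib (Z i) (Z j) μ μ) (hEid : ∀ i j, IdentDistrib (E i) (E j) μ μ)
    {g : ℝ × ℝ → ℝ} (hg : Measurable g) (hint : Integrable (fun ω => g (Z 0 ω, E 0 ω)) μ) :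
    ∀ᵐ ω ∂μ, Tendsto (fun n : ℕ => (∑ j ∈ Icc 1 n, g (Z j ω, E j ω)) / n) atTop
      (𝓝 (∫ ω, g (Z 0 ω, E 0 ω) ∂μ)) := by
  have hmeas : ∀ i, Measurable (Sum.elim Z E i) := by
    rintro (i | i)
    exacts [hZ i, hE i]
  have hpair : ∀ i j, IdentDistrib (fun ω => (Z i ω, E i ω)) (fun ω => (Z j ω, E j ω)) μ μ :=
    fun i j => (hZid i j).prodMk (hEid i j) (hind.indepFun Sum.inl_ne_inr)
      (hind.indepFun Sum.inl_ne_inr)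
  have hslln := strong_law_ae_real (fun i ω => g (Z (i + 1) ω, E (i + 1) ω))
    (((hpair 1 0).comp hg).integrable_iff.mpr hint)
    (fun i j hij => (hind.indepFun_prodMk_prodMk hmeas (.inl (i + 1)) (.inr (i + 1))
      (.inl (j + 1)) (.inr (j + 1)) (by simpa using hij) (by simp) (by simp)
      (by simpa using hij)).comp hg hg)
    (fun i => (hpair (i + 1) 1).comp hg)
  have hmean : ∫ ω, g (Z (0 + 1) ω, E (0 + 1) ω) ∂μ = ∫ ω, g (Z 0 ω, E 0 ω) ∂μ :=
    ((hpair 1 0).comp hg).integral_eq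
  filter_upwards [hslln] with ω hω
  rw [← hmean]
  refine hω.congr fun n => ?_
  rw [range_eq_Ico, sum_Ico_add' (fun j => g (Z j ω, E j ω)) 0 n 1]
  rfl

theorem ProbabilityTheory.ae_tendsto_sum_sq_mixture_div {Ω : Type*} [MeasurableSpace Ω]
    {μ : Measure Ω} [IsProbabilityMeasure μ] {Z : ℕ → Ω → ℝ} {B : ℕ → Ω → Bool}
    (hZ : ∀ j, Measurable (Z j)) (hB : ∀ j, Measurable (B j))
    (hind : iIndepFun (Sum.elim Z fun j ω => if B j ω then (1 : ℝ) else 0) μ)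
    (hident : ∀ i j, IdentDistrib (Z i) (Z j) μ μ) (hvar : ∫ ω, Z 0 ω ^ 2 ∂μ = 1)
    {w : ℝ} (hBer : ∀ j, (μ {ω | B j ω = true}).toReal = w)
    {τ1 τ2 : ℕ → ℝ} (hτ1 : ∀ n, 0 < τ1 n) (hτ2 : ∀ n, 0 < τ2 n)
    (hout : w ≠ 0 → Tendsto (fun n => τ1 n / τ2 n) atTop (𝓝 0)) :
    ∀ᵐ ω ∂μ, Tendsto (fun n : ℕ => (∑ j ∈ Icc 1 n,
        (if B j ω then √(τ2 n) * Z j ω else √(τ1 n) * Z j ω) ^ 2) /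
        (n * if w = 0 then τ1 n else w * τ2 n)) atTop (𝓝 1) := by
  set E : ℕ → Ω → ℝ := fun j ω => if B j ω then 1 else 0
  have hbool : Measurable fun b : Bool => if b then (1 : ℝ) else 0 := .of_discrete
  have hE : ∀ j, Measurable (E j) := fun j => hbool.comp (hB j)
  have hEid : ∀ i j, IdentDistrib (E i) (E j) μ μ := fun i j =>
    (identDistrib_of_measure_eq_true (hB i) (hB j) ((ENNReal.toReal_eq_toReal_iff'
      (measure_ne_top _ _) (measure_ne_top _ _)).mp ((hBer i).trans (hBer j).symm))).comp hbool
  have hZ2 : Integrable (fun ω => Z 0 ω ^ 2) μ :=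
    Integrable.of_integral_ne_zero (by rw [hvar]; exact one_ne_zero)
  have hEZ2 : Integrable (fun ω => E 0 ω * Z 0 ω ^ 2) μ :=
    hZ2.bdd_mul (c := 1) (hE 0).aestronglyMeasurable
      (ae_of_all _ fun ω => by by_cases h : B 0 ω <;> simp [E, h])
  have hEmean : ∫ ω, E 0 ω ∂μ = w := by
    have hset : MeasurableSet {ω | B 0 ω = true} := hB 0 (measurableSet_singleton true)
    rw [← hBer 0, ← measureReal_def, ← integral_indicator_one hset]
    congr 1
    ext ω
    by_cases h : B 0 ω <;> simp [E, h]
  have hEZ2mean : ∫ ω, E 0 ω * Z 0 ω ^ 2 ∂μ = w := by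
    have hindep0 : IndepFun (E 0) (fun ω => Z 0 ω ^ 2) μ :=
      (hind.indepFun (Sum.inr_ne_inl (a := 0) (b := 0))).comp measurable_id
        (measurable_id.pow_const 2)
    rw [hindep0.integral_fun_mul_eq_mul_integral (hE 0).aestronglyMeasurable
      ((hZ 0).pow_const 2).aestronglyMeasurable, hEmean, hvar, mul_one]
  have hS := ae_tendsto_sum_Icc_div_of_iIndepFun_sum_elim hZ hE hind hident hEid
    (g := fun p => p.1 ^ 2) (by fun_prop) hZ2
  have hA := ae_tendsto_sum_Icc_div_of_iIndepFun_sum_elim hZ hE hind hident hEid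
    (g := fun p => p.2 * p.1 ^ 2) (by fun_prop) hEZ2
  simp only [hvar] at hS
  simp only [hEZ2mean] at hA
  have hsplit : ∀ n ω, ∑ j ∈ Icc 1 n, (if B j ω then √(τ2 n) * Z j ω else √(τ1 n) * Z j ω) ^ 2 =
      τ2 n * ∑ j ∈ Icc 1 n, E j ω * Z j ω ^ 2 +
        τ1 n * (∑ j ∈ Icc 1 n, Z j ω ^ 2 - ∑ j ∈ Icc 1 n, E j ω * Z j ω ^ 2) := by
    intro n ω
    rw [mul_sum, ← sum_sub_distrib, mul_sum, ← sum_add_distrib]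
    refine sum_congr rfl fun j _ => ?_
    by_cases h : B j ω <;> simp [E, h, mul_pow, Real.sq_sqrt, (hτ1 n).le, (hτ2 n).le]
  by_cases hw : w = 0
  · have hB0 : ∀ᵐ ω ∂μ, ∀ j, B j ω = false := by
      refine ae_all_iff.2 fun j => ?_
      have h0 := (ENNReal.toReal_eq_zero_iff _).mp ((hBer j).trans hw)
      simpa [ae_iff] using h0.resolve_right (measure_ne_top _ _)
    filter_upwards [hS, hB0] with ω hω hω0
    refine hω.congr fun n => ?_
    rw [hsplit, if_pos hw]
    simp only [E, hω0, Bool.false_eq_true, if_false, zero_mul, sum_const_zero, mul_zero,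
      zero_add, sub_zero]
    rw [mul_comm (n : ℝ), mul_div_mul_left _ _ (hτ1 n).ne']
  · filter_upwards [hS, hA] with ω hSω hAω
    simpa only [hsplit, if_neg hw] using
      tendsto_mixture_div hw (fun n => (hτ2 n).ne') hAω hSω (hout hw)

theorem stmt15_general
    {Ω : Type} [MeasureSpace Ω] [IsProbabilityMeasure (ℙ : Measure Ω)]
    (K : ℕ) (w : ℕ → ℝ)
    (z : ℕ × ℕ → Ω → ℝ) (B : ℕ × ℕ → Ω → Bool)
    (hzmeas : ∀ p, Measurable (z p)) (hBmeas : ∀ p, Measurable (B p))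
    (hindep : iIndepFun
      (Sum.elim z fun p ω => if B p ω then (1 : ℝ) else 0) ℙ)
    (hident : ∀ p q, IdentDistrib (z p) (z q) ℙ ℙ)
    (hvar : ∀ p, ∫ ω, (z p ω) ^ 2 = 1)
    (hBer : ∀ i j, (ℙ {ω | B (i, j) ω = true}).toReal = w i)
    (d : ℕ → ℕ) (hd : Tendsto d atTop atTop)
    (τ1 τ2 : ℕ → ℕ → ℝ)
    (hτ1 : ∀ n i, 0 < τ1 n i) (hτ2 : ∀ n i, 0 < τ2 n i)
    (y : ℕ → ℕ → ℕ → Ω → ℝ)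
    (hy : ∀ n i j ω, y n i j ω =
      if B (i, j) ω then Real.sqrt (τ2 n i) * z (i, j) ω
      else Real.sqrt (τ1 n i) * z (i, j) ω)
    (lam : ℕ → ℕ → ℝ)
    (hlam : ∀ n i, lam n i = if w i = 0 then τ1 n i else w i * τ2 n i)
    (q : ℕ → ℕ)
    (U : ℕ → ℕ → ℕ → ℝ)
    (hUon : ∀ n, ∀ i ∈ Finset.Icc 1 (d n), ∀ j ∈ Finset.Icc 1 (d n),
      ∑ a ∈ Finset.Icc 1 (d n), U n i a * U n j a = if i = j then (1 : ℝ) else 0)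
    (X : ℕ → ℕ → Ω → ℕ → ℝ)
    (hX : ∀ n j ω a, X n j ω a = ∑ i ∈ Finset.Icc 1 (d n), y n i j ω * U n i a)
    (Sighat : ℕ → Ω → ℕ → ℕ → ℝ)
    (hSighat : ∀ n ω a b, Sighat n ω a b =
      (n : ℝ)⁻¹ * ∑ j ∈ Finset.Icc 1 n, X n j ω a * X n j ω b)
    (lamhat : ℕ → ℕ → Ω → ℝ)
    (Uhat : ℕ → ℕ → Ω → ℕ → ℝ)
    (hUhatOn : ∀ n ω, ∀ i ∈ Finset.Icc 1 (d n), ∀ j ∈ Finset.Icc 1 (d n),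
      ∑ a ∈ Finset.Icc 1 (d n), Uhat n i ω a * Uhat n j ω a = if i = j then (1 : ℝ) else 0)
    (heig : ∀ n ω, ∀ i ∈ Finset.Icc 1 (d n), ∀ a ∈ Finset.Icc 1 (d n),
      ∑ b ∈ Finset.Icc 1 (d n), Sighat n ω a b * Uhat n i ω b = lamhat n i ω * Uhat n i ω a)
    (hout : ∀ k, 1 ≤ k → k ≤ K → 0 < w k →
      Tendsto (fun n => τ1 n k / τ2 n k) atTop (nhds 0)) :
    ∀ k, 1 ≤ k → k ≤ K →
      (∀ᵐ ω ∂ℙ, Tendsto (fun n =>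
        (∑ a ∈ Finset.Icc 1 (d n), ∑ b ∈ Finset.Icc 1 (d n),
          U n k a * Sighat n ω a b * U n k b) / lam n k) atTop (nhds 1)) ∧
      (∀ᵐ ω ∂ℙ, Tendsto (fun n =>
        (∑ j ∈ Finset.Icc 1 n, (y n k j ω) ^ 2) / ((n : ℝ) * lam n k)) atTop (nhds 1)) ∧
      (∀ᵐ ω ∂ℙ, Tendsto (fun n =>
        (∑ i ∈ Finset.Icc 1 (d n), lamhat n i ω *
          (∑ a ∈ Finset.Icc 1 (d n), U n k a * Uhat n i ω a) ^ 2) / lam n k)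
        atTop (nhds 1)) := by
  intro k hk1 hkK
  have hrow : ∀ᵐ ω ∂ℙ, Tendsto (fun n =>
      (∑ j ∈ Finset.Icc 1 n, (y n k j ω) ^ 2) / ((n : ℝ) * lam n k)) atTop (nhds 1) := by
    have hindk := hindep.precomp (Sum.map_injective.2
      ⟨Prod.mk_right_injective k, Prod.mk_right_injective k⟩)
    rw [← Function.comp_def, Sum.elim_comp_map] at hindk
    simp only [hy, hlam]
    exact ae_tendsto_sum_sq_mixture_div (fun j => hzmeas (k, j)) (fun j => hBmeas (k, j)) hindk
      (fun i j => hident (k, i) (k, j)) (hvar (k, 0)) (hBer k) (fun n => hτ1 n k)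
      (fun n => hτ2 n k) fun hw =>
        hout k hk1 hkK ((ENNReal.toReal_nonneg.trans_eq (hBer k 0)).lt_of_ne' hw)
  have hquad : ∀ᵐ ω ∂ℙ, Tendsto (fun n =>
      (∑ a ∈ Finset.Icc 1 (d n), ∑ b ∈ Finset.Icc 1 (d n),
        U n k a * Sighat n ω a b * U n k b) / lam n k) atTop (nhds 1) := by
    filter_upwards [hrow] with ω hω
    refine hω.congr' ?_
    filter_upwards [hd.eventually_ge_atTop k] with n hn
    simp only [hSighat, hX]
    rw [RowsOrthonormalOn.sum_sum_mul_mul_eq_mul_sum_sq (hUon n) (mem_Icc.2 ⟨hk1, hn⟩),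
      inv_mul_eq_div, div_div]
  refine ⟨hquad, hrow, ?_⟩
  filter_upwards [hquad] with ω hω
  refine hω.congr fun n => ?_
  rw [RowsOrthonormalOn.sum_eigenvalue_mul_sq (hUhatOn n ω) (heig n ω)]

theorem stmt15
    {Ω : Type} [MeasureSpace Ω] [IsProbabilityMeasure (ℙ : Measure Ω)]
    (K : ℕ) (w : ℕ → ℝ)
    (hw01 : ∀ i, 0 ≤ w i ∧ w i ≤ 1) (hwK : ∀ i, K < i → w i = 0)
    (z : ℕ × ℕ → Ω → ℝ) (B : ℕ × ℕ → Ω → Bool)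
    (hzmeas : ∀ p, Measurable (z p)) (hBmeas : ∀ p, Measurable (B p))
    (hindep : iIndepFun
      (Sum.elim z fun p ω => if B p ω then (1 : ℝ) else 0) ℙ)
    (hident : ∀ p q, IdentDistrib (z p) (z q) ℙ ℙ)
    (hmean : ∀ p, ∫ ω, z p ω = 0)
    (hvar : ∀ p, ∫ ω, (z p ω) ^ 2 = 1)
    (hmom4 : ∀ p, Integrable fun ω => (z p ω) ^ 4)
    (hBer : ∀ i j, (ℙ {ω | B (i, j) ω = true}).toReal = w i)
    (d : ℕ → ℕ) (hd : Tendsto d atTop atTop)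
    (τ1 τ2 : ℕ → ℕ → ℝ)
    (hτ1 : ∀ n i, 0 < τ1 n i) (hτ2 : ∀ n i, 0 < τ2 n i)
    (y : ℕ → ℕ → ℕ → Ω → ℝ)
    (hy : ∀ n i j ω, y n i j ω =
      if B (i, j) ω then Real.sqrt (τ2 n i) * z (i, j) ω
      else Real.sqrt (τ1 n i) * z (i, j) ω)
    (lam : ℕ → ℕ → ℝ)
    (hlam : ∀ n i, lam n i = if w i = 0 then τ1 n i else w i * τ2 n i)
    (clam : ℝ) (hclam : 0 < clam)
    (hA1 : ∀ ε > (0 : ℝ), ∀ᶠ n in atTop, ∀ i, K < i → i ≤ d n →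
      |τ1 n i - clam| < ε ∧ |τ2 n i - clam| < ε)
    (hA2 : ∀ i, 1 ≤ i → i ≤ K → 0 < w i → Tendsto (fun n => τ1 n i) atTop (nhds clam))
    (c : ℝ≥0∞)
    (hc : Tendsto (fun n => (d n : ℝ≥0∞) / (n : ℝ≥0∞)) atTop (nhds c))
    (M : ℕ) (hM : 1 ≤ M) (q : ℕ → ℕ) (pp : ℕ → ℕ)
    (hq : ∀ m, 1 ≤ m → m ≤ M → 0 < q m)
    (hpp0 : pp 0 = 0) (hpps : ∀ m, pp (m + 1) = pp m + q (m + 1))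
    (hppM : pp M = K)
    (δ : ℕ → ℕ → ℝ)
    (hδpos : ∀ n m, 1 ≤ m → m ≤ M → 0 < δ n m)
    (hA3 : ∀ m, 1 ≤ m → m ≤ M → ∀ i, pp (m - 1) < i → i ≤ pp m →
      Tendsto (fun n => lam n i / δ n m) atTop (nhds 1))
    (hA4 : ∀ m, 1 ≤ m → m < M → SuccSeq (fun n => δ n m) fun n => δ n (m + 1))
    (hA4' : SuccSeq (fun n => δ n M) fun n => lam n (K + 1))
    (U : ℕ → ℕ → ℕ → ℝ)
    (hUon : ∀ n, ∀ i ∈ Finset.Icc 1 (d n), ∀ j ∈ Finset.Icc 1 (d n),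
      ∑ a ∈ Finset.Icc 1 (d n), U n i a * U n j a = if i = j then (1 : ℝ) else 0)
    (X : ℕ → ℕ → Ω → ℕ → ℝ)
    (hX : ∀ n j ω a, X n j ω a = ∑ i ∈ Finset.Icc 1 (d n), y n i j ω * U n i a)
    (Sighat : ℕ → Ω → ℕ → ℕ → ℝ)
    (hSighat : ∀ n ω a b, Sighat n ω a b =
      (n : ℝ)⁻¹ * ∑ j ∈ Finset.Icc 1 n, X n j ω a * X n j ω b)
    (lamhat : ℕ → ℕ → Ω → ℝ)
    (Uhat : ℕ → ℕ → Ω → ℕ → ℝ)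
    (hUhatOn : ∀ n ω, ∀ i ∈ Finset.Icc 1 (d n), ∀ j ∈ Finset.Icc 1 (d n),
      ∑ a ∈ Finset.Icc 1 (d n), Uhat n i ω a * Uhat n j ω a = if i = j then (1 : ℝ) else 0)
    (heig : ∀ n ω, ∀ i ∈ Finset.Icc 1 (d n), ∀ a ∈ Finset.Icc 1 (d n),
      ∑ b ∈ Finset.Icc 1 (d n), Sighat n ω a b * Uhat n i ω b = lamhat n i ω * Uhat n i ω a)
    (hdesc : ∀ n ω i j, 1 ≤ i → i ≤ j → j ≤ d n → lamhat n j ω ≤ lamhat n i ω)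
    (hout : ∀ k, 1 ≤ k → k ≤ K → 0 < w k →
      Tendsto (fun n => τ1 n k / τ2 n k) atTop (nhds 0)) :
    ∀ k, 1 ≤ k → k ≤ K →
      (∀ᵐ ω ∂ℙ, Tendsto (fun n =>
        (∑ a ∈ Finset.Icc 1 (d n), ∑ b ∈ Finset.Icc 1 (d n),
          U n k a * Sighat n ω a b * U n k b) / lam n k) atTop (nhds 1)) ∧
      (∀ᵐ ω ∂ℙ, Tendsto (fun n =>
        (∑ j ∈ Finset.Icc 1 n, (y n k j ω) ^ 2) / ((n : ℝ) * lam n k)) atTop (nhds 1)) ∧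
      (∀ᵐ ω ∂ℙ, Tendsto (fun n =>
        (∑ i ∈ Finset.Icc 1 (d n), lamhat n i ω *
          (∑ a ∈ Finset.Icc 1 (d n), U n k a * Uhat n i ω a) ^ 2) / lam n k)
        atTop (nhds 1)) :=
  stmt15_general K w z B hzmeas hBmeas hindep hident hvar hBer d hd τ1 τ2 hτ1 hτ2 y hy lam hlam q U
    hUon X hX Sighat hSighat lamhat Uhat hUhatOn heig hout
end

section
/- (Distance between a high-dimensional outlier and an inlier with a positive fraction of outlier components.) In the high-dimensional geometric setting, assume K^{(d)}/d → p ∈ (0,1] as d → ∞ and τ^{(d)} → τ ∈ (0,∞). Then (1/d) ‖X^{(d)} − X'^{(d)}‖² → p(τ − σ²) + 2σ² almost surely as d → ∞. -/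
open MeasureTheory ProbabilityTheory Filter Finset Asymptotics ENNReal

/-!
Coordinatewise, the squared distance is `σ² (z_i - z'_i)²` off the outlier set and
`(σ z_i - √τ z'_i)²` on it, so it equals `σ² ∑_{i ≤ m} (z_i - z'_i)²` plus the correction
`(τ - σ²) ∑_{i ∈ I_out} z'_i² - 2σ(√τ - σ) ∑_{i ∈ I_out} z_i z'_i`. Divided by `m`, each of the
three sums obeys a strong law of large numbers, with limits `2`, `p` and `0`. For the sums over the
nested sets `I_out` the strong law is transferred from the ordinary one by enumerating the union
of the sets injectively so that each `I_out^{(m)}` is an initial segment of the enumeration.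
-/

open scoped NNReal

namespace Finset

variable {α : Type*} [DecidableEq α]

noncomputable def nestedEnum (J : ℕ → Finset α) : ℕ → List α
  | 0 => (J 0).toList
  | m + 1 => nestedEnum J m ++ (J (m + 1) \ J m).toList

variable {J : ℕ → Finset α}

lemma nestedEnum_prefix {a b : ℕ} (hab : a ≤ b) : nestedEnum J a <+: nestedEnum J b := by
  induction b, hab using Nat.le_induction with
  | base => exact List.prefix_refl _
  | succ b _ ih => exact ih.trans (List.prefix_append _ _)

lemma toFinset_nestedEnum (hJ : Monotone J) (m : ℕ) : (nestedEnum J m).toFinset = J m := by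
  induction m with
  | zero => simp [nestedEnum]
  | succ m ih =>
    rw [nestedEnum, List.toFinset_append, ih, toList_toFinset,
      union_sdiff_of_subset (hJ m.le_succ)]

lemma nodup_nestedEnum (hJ : Monotone J) (m : ℕ) : (nestedEnum J m).Nodup := by
  induction m with
  | zero => exact nodup_toList _
  | succ m ih =>
    refine List.nodup_append.mpr ⟨ih, nodup_toList _, fun a ha b hb hab ↦ ?_⟩
    rw [← List.mem_toFinset, toFinset_nestedEnum hJ] at ha
    exact (mem_sdiff.mp (mem_toList.mp hb)).2 (hab ▸ ha)

lemma length_nestedEnum (hJ : Monotone J) (m : ℕ) : (nestedEnum J m).length = #(J m) := by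
  rw [← toFinset_nestedEnum hJ m, List.toFinset_card_of_nodup (nodup_nestedEnum hJ m)]

lemma exists_injective_image_range_eq (hJ : Monotone J)
    (hcard : Tendsto (fun m ↦ #(J m)) atTop atTop) :
    ∃ φ : ℕ → α, Function.Injective φ ∧ ∀ m, (range #(J m)).image φ = J m := by
  set L := nestedEnum J
  have hlen : Tendsto (fun m ↦ (L m).length) atTop atTop := by
    simpa only [L, length_nestedEnum hJ] using hcard
  have hex (k : ℕ) : ∃ m, k < (L m).length := (hlen.eventually_gt_atTop k).exists
  let φ (k : ℕ) : α := (L (hex k).choose)[k]'(hex k).choose_spec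
  have hφ {m k : ℕ} (hk : k < (L m).length) : (L m)[k] = φ k := by
    have h₁ := nestedEnum_prefix (J := J) (le_max_left m (hex k).choose)
    have h₂ := nestedEnum_prefix (J := J) (le_max_right m (hex k).choose)
    rw [h₁.getElem hk, ← h₂.getElem (hex k).choose_spec]
  refine ⟨φ, fun k l hkl ↦ ?_, fun m ↦ ?_⟩
  · obtain ⟨m, hm⟩ := hex (max k l)
    have hk : k < (L m).length := (le_max_left k l).trans_lt hm
    have hl : l < (L m).length := (le_max_right k l).trans_lt hm
    rw [← hφ hk, ← hφ hl] at hkl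
    exact (nodup_nestedEnum hJ m).getElem_inj_iff.mp hkl
  · ext a
    rw [← length_nestedEnum hJ, ← toFinset_nestedEnum hJ m, List.mem_toFinset,
      List.mem_iff_getElem, mem_image]
    simp only [mem_range]
    exact ⟨fun ⟨k, hk, h⟩ ↦ ⟨k, hk, hφ hk ▸ h⟩, fun ⟨k, hk, h⟩ ↦ ⟨k, hk, (hφ hk).symm ▸ h⟩⟩

end Finset

namespace ProbabilityTheory

variable {Ω : Type*} [MeasureSpace Ω]

theorem strong_law_ae_real_finset (X : ℕ → Ω → ℝ) (hint : Integrable (X 0))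
    (hindep : Pairwise fun i j ↦ IndepFun (X i) (X j)) (hident : ∀ i, IdentDistrib (X i) (X 0))
    {J : ℕ → Finset ℕ} (hJ : Monotone J) {p : ℝ} (hp : 0 < p)
    (hcard : Tendsto (fun m ↦ (#(J m) : ℝ) / m) atTop (nhds p)) :
    ∀ᵐ ω, Tendsto (fun m ↦ (∑ i ∈ J m, X i ω) / m) atTop (nhds (p * 𝔼[X 0])) := by
  have hcard_top : Tendsto (fun m ↦ #(J m)) atTop atTop := by
    refine tendsto_natCast_atTop_iff.mp ((hcard.pos_mul_atTop hp
      tendsto_natCast_atTop_atTop).congr' ?_)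
    filter_upwards [eventually_ne_atTop 0] with m hm
    field_simp
  obtain ⟨φ, hφ, hJφ⟩ := exists_injective_image_range_eq hJ hcard_top
  have hlaw := strong_law_ae_real (X ∘ φ) ((hident (φ 0)).integrable_iff.mpr hint)
    (fun k l hkl ↦ hindep (hφ.ne hkl)) (fun k ↦ (hident (φ k)).trans (hident (φ 0)).symm)
  rw [Function.comp_apply, (hident (φ 0)).integral_eq] at hlaw
  filter_upwards [hlaw] with ω hω
  refine (hcard.mul (hω.comp hcard_top)).congr' ?_
  filter_upwards [hcard_top.eventually_gt_atTop 0] with m hm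
  have hsum : ∑ i ∈ J m, X i ω = ∑ k ∈ range #(J m), X (φ k) ω := by
    rw [← sum_image (f := fun i ↦ X i ω) hφ.injOn, hJφ]
  simp only [Function.comp_apply, hsum]
  field_simp

theorem strong_law_ae_real_finset_pair [IsProbabilityMeasure (ℙ : Measure Ω)]
    {ν ν' : Measure ℝ} (z z' : ℕ → Ω → ℝ)
    (hz : ∀ i, Measurable (z i)) (hz' : ∀ i, Measurable (z' i))
    (hindep : iIndepFun (Sum.elim z z'))
    (hlaw : ∀ i, Measure.map (z i) ℙ = ν) (hlaw' : ∀ i, Measure.map (z' i) ℙ = ν')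
    {g : ℝ × ℝ → ℝ} (hg : Measurable g) (hgi : Integrable g (ν.prod ν'))
    {J : ℕ → Finset ℕ} (hJ : Monotone J) {p : ℝ} (hp : 0 < p)
    (hcard : Tendsto (fun m ↦ (#(J m) : ℝ) / m) atTop (nhds p)) :
    ∀ᵐ ω, Tendsto (fun m ↦ (∑ i ∈ J m, g (z i ω, z' i ω)) / m) atTop
      (nhds (p * ∫ x, g x ∂ν.prod ν')) := by
  have hmeas : ∀ s, Measurable (Sum.elim z z' s) := by
    rintro (i | i)
    exacts [hz i, hz' i]
  have hpair (i : ℕ) : IdentDistrib (fun ω ↦ (z i ω, z' i ω)) id ℙ (ν.prod ν') := by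
    refine ⟨((hz i).prodMk (hz' i)).aemeasurable, aemeasurable_id, ?_⟩
    rw [Measure.map_id, ← hlaw i, ← hlaw' i, ← (indepFun_iff_map_prod_eq_prod_map_map
      (hz i).aemeasurable (hz' i).aemeasurable).mp (hindep.indepFun Sum.inl_ne_inr)]
  have hident (i : ℕ) := (hpair i).comp hg
  refine strong_law_ae_real_finset (fun i ω ↦ g (z i ω, z' i ω))
    ((hident 0).integrable_iff.mpr hgi) (fun i j hij ↦ ?_)
    (fun i ↦ (hident i).trans (hident 0).symm) hJ hp hcard |>.mono fun ω hω ↦ ?_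
  · exact (hindep.indepFun_prodMk_prodMk hmeas (.inl i) (.inr i) (.inl j) (.inr j)
      (by simpa using hij) Sum.inl_ne_inr Sum.inr_ne_inl (by simpa using hij)).comp hg hg
  · have h0 : ∫ ω, g (z 0 ω, z' 0 ω) = ∫ x, g x ∂ν.prod ν' := (hident 0).integral_eq
    rwa [h0] at hω

variable {μ μ₁ μ₂ : ℝ} {v v₁ v₂ : ℝ≥0}

lemma integrable_sq_gaussianReal : Integrable (fun x : ℝ ↦ x ^ 2) (gaussianReal μ v) :=
  (memLp_id_gaussianReal 2).integrable_sq

lemma integral_sq_gaussianReal : ∫ x, x ^ 2 ∂gaussianReal μ v = μ ^ 2 + v := by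
  have h := variance_eq_sub (memLp_id_gaussianReal (μ := μ) (v := v) 2)
  simp only [variance_id_gaussianReal, Pi.pow_apply, id_eq, integral_id_gaussianReal] at h
  linarith

lemma gaussianReal_prod_map_sub :
    ((gaussianReal μ₁ v₁).prod (gaussianReal μ₂ v₂)).map (fun x ↦ x.1 - x.2)
      = gaussianReal (μ₁ - μ₂) (v₁ + v₂) := by
  have h := gaussianReal_conv_gaussianReal (m₁ := μ₁) (m₂ := -μ₂) (v₁ := v₁) (v₂ := v₂)
  rw [← gaussianReal_map_neg, ← Measure.map_id (μ := gaussianReal μ₁ v₁), Measure.conv,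
    Measure.map_prod_map _ _ measurable_id measurable_neg,
    Measure.map_map (by fun_prop) (by fun_prop)] at h
  rw [sub_eq_add_neg, ← h]
  rfl

lemma integral_sub_sq_gaussianReal_prod :
    ∫ x, (x.1 - x.2) ^ 2 ∂(gaussianReal μ₁ v₁).prod (gaussianReal μ₂ v₂)
      = (μ₁ - μ₂) ^ 2 + v₁ + v₂ := by
  rw [← integral_map (f := fun u : ℝ ↦ u ^ 2) (by fun_prop) (by fun_prop),
    gaussianReal_prod_map_sub, integral_sq_gaussianReal]
  push_cast; ring

lemma integrable_sub_sq_gaussianReal_prod :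
    Integrable (fun x : ℝ × ℝ ↦ (x.1 - x.2) ^ 2)
      ((gaussianReal μ₁ v₁).prod (gaussianReal μ₂ v₂)) := by
  have h : Integrable (fun u : ℝ ↦ u ^ 2)
      (((gaussianReal μ₁ v₁).prod (gaussianReal μ₂ v₂)).map (fun x ↦ x.1 - x.2)) := by
    rw [gaussianReal_prod_map_sub]; exact integrable_sq_gaussianReal
  exact (integrable_map_measure (by fun_prop) (by fun_prop)).mp h

lemma integral_snd_sq_gaussianReal_prod :
    ∫ x, x.2 ^ 2 ∂(gaussianReal μ₁ v₁).prod (gaussianReal μ₂ v₂) = μ₂ ^ 2 + v₂ := by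
  simp [integral_fun_snd (f := fun y : ℝ ↦ y ^ 2), integral_sq_gaussianReal]

lemma integrable_fst_mul_snd_gaussianReal_prod :
    Integrable (fun x : ℝ × ℝ ↦ x.1 * x.2) ((gaussianReal μ₁ v₁).prod (gaussianReal μ₂ v₂)) :=
  (memLp_one_iff_integrable.mp (memLp_id_gaussianReal 1)).mul_prod
    (memLp_one_iff_integrable.mp (memLp_id_gaussianReal 1))

lemma integral_fst_mul_snd_gaussianReal_prod :
    ∫ x, x.1 * x.2 ∂(gaussianReal μ₁ v₁).prod (gaussianReal μ₂ v₂) = μ₁ * μ₂ := by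
  rw [integral_prod_mul (f := fun x : ℝ ↦ x) (g := fun x : ℝ ↦ x), integral_id_gaussianReal,
    integral_id_gaussianReal]

end ProbabilityTheory

lemma sum_sq_sub_ite_mem {ι : Type*} [DecidableEq ι] {s t : Finset ι} (hts : t ⊆ s)
    (x y : ι → ℝ) (a b : ℝ) :
    ∑ i ∈ s, (a * x i - if i ∈ t then b * y i else a * y i) ^ 2
      = a ^ 2 * ∑ i ∈ s, (x i - y i) ^ 2 + (b ^ 2 - a ^ 2) * ∑ i ∈ t, y i ^ 2
        - 2 * a * (b - a) * ∑ i ∈ t, x i * y i := by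
  calc ∑ i ∈ s, (a * x i - if i ∈ t then b * y i else a * y i) ^ 2
      = ∑ i ∈ s, (a ^ 2 * (x i - y i) ^ 2 + if i ∈ t then
          (b ^ 2 - a ^ 2) * y i ^ 2 - 2 * a * (b - a) * (x i * y i) else 0) :=
        sum_congr rfl fun i _ ↦ by split_ifs <;> ring
    _ = _ := by
      rw [sum_add_distrib, ← mul_sum, sum_ite_mem, inter_eq_right.mpr hts, sum_sub_distrib,
        ← mul_sum, ← mul_sum, add_sub_assoc]

theorem stmt17_general
    {Ω : Type} [MeasureSpace Ω] [IsProbabilityMeasure (ℙ : Measure Ω)]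
    (σ : ℝ)
    (z z' : ℕ → Ω → ℝ)
    (hzmeas : ∀ i, Measurable (z i)) (hzmeas' : ∀ i, Measurable (z' i))
    (hindep : iIndepFun (Sum.elim z z') ℙ)
    (hgauss : ∀ i, Measure.map (z i) ℙ = gaussianReal 0 1)
    (hgauss' : ∀ i, Measure.map (z' i) ℙ = gaussianReal 0 1)
    (Iout : ℕ → Finset ℕ)
    (hIsub : ∀ m, Iout m ⊆ Finset.Icc 1 m)
    (hInested : ∀ m, Iout m ⊆ Iout (m + 1))
    (τ : ℕ → ℝ) (hτpos : ∀ m, 0 < τ m)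
    (p : ℝ) (hp0 : 0 < p)
    (hK : Tendsto (fun m => ((Iout m).card : ℝ) / m) atTop (nhds p))
    (t : ℝ)
    (hτ : Tendsto τ atTop (nhds t)) :
    ∀ᵐ ω ∂ℙ, Tendsto (fun m =>
        (∑ i ∈ Finset.Icc 1 m,
          (σ * z i ω -
            (if i ∈ Iout m then Real.sqrt (τ m) * z' i ω else σ * z' i ω)) ^ 2) / m)
      atTop (nhds (p * (t - σ ^ 2) + 2 * σ ^ 2)) := by
  have hIcc : Tendsto (fun m : ℕ ↦ (#(Icc 1 m) : ℝ) / m) atTop (nhds 1) :=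
    tendsto_const_nhds.congr' <| (eventually_ne_atTop 0).mono fun m hm ↦ by simp [hm]
  have hIout : Monotone Iout := monotone_nat_of_le_succ hInested
  have hdiff := strong_law_ae_real_finset_pair z z' hzmeas hzmeas' hindep hgauss hgauss'
    (g := fun x ↦ (x.1 - x.2) ^ 2) (by fun_prop) integrable_sub_sq_gaussianReal_prod
    (fun _ _ h ↦ Icc_subset_Icc_right h) one_pos hIcc
  have hsq := strong_law_ae_real_finset_pair z z' hzmeas hzmeas' hindep hgauss hgauss'
    (g := fun x ↦ x.2 ^ 2) (by fun_prop) (integrable_sq_gaussianReal.comp_snd _) hIout hp0 hK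
  have hmul := strong_law_ae_real_finset_pair z z' hzmeas hzmeas' hindep hgauss hgauss'
    (g := fun x ↦ x.1 * x.2) (by fun_prop) integrable_fst_mul_snd_gaussianReal_prod hIout hp0 hK
  rw [integral_sub_sq_gaussianReal_prod] at hdiff
  rw [integral_snd_sq_gaussianReal_prod] at hsq
  rw [integral_fst_mul_snd_gaussianReal_prod] at hmul
  filter_upwards [hdiff, hsq, hmul] with ω hdiff hsq hmul
  have hlim := ((hdiff.const_mul (σ ^ 2)).add ((hτ.sub_const (σ ^ 2)).mul hsq)).sub
    (((hτ.sqrt.sub_const σ).const_mul (2 * σ)).mul hmul)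
  convert hlim using 2 with m
  · rw [sum_sq_sub_ite_mem (hIsub m), Real.sq_sqrt (hτpos m).le]
    ring
  · norm_num
    ring

theorem stmt17
    {Ω : Type} [MeasureSpace Ω] [IsProbabilityMeasure (ℙ : Measure Ω)]
    (σ : ℝ) (hσ : 0 < σ)
    (z z' : ℕ → Ω → ℝ)
    (hzmeas : ∀ i, Measurable (z i)) (hzmeas' : ∀ i, Measurable (z' i))
    (hindep : iIndepFun (Sum.elim z z') ℙ)
    (hgauss : ∀ i, Measure.map (z i) ℙ = gaussianReal 0 1)
    (hgauss' : ∀ i, Measure.map (z' i) ℙ = gaussianReal 0 1)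
    (Iout : ℕ → Finset ℕ)
    (hIsub : ∀ m, Iout m ⊆ Finset.Icc 1 m)
    (hInested : ∀ m, Iout m ⊆ Iout (m + 1))
    (τ : ℕ → ℝ) (hτpos : ∀ m, 0 < τ m)
    (p : ℝ) (hp0 : 0 < p) (hp1 : p ≤ 1)
    (hK : Tendsto (fun m => ((Iout m).card : ℝ) / m) atTop (nhds p))
    (t : ℝ) (ht : 0 < t)
    (hτ : Tendsto τ atTop (nhds t)) :
    ∀ᵐ ω ∂ℙ, Tendsto (fun m =>
        (∑ i ∈ Finset.Icc 1 m,
          (σ * z i ω -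
            (if i ∈ Iout m then Real.sqrt (τ m) * z' i ω else σ * z' i ω)) ^ 2) / m)
      atTop (nhds (p * (t - σ ^ 2) + 2 * σ ^ 2)) :=
  stmt17_general σ z z' hzmeas hzmeas' hindep hgauss hgauss' Iout hIsub hInested τ hτpos p hp0 hK t
    hτ
end

section
/- (Fixed number of outlier components: random limiting radius.) In the high-dimensional geometric setting, assume the outlier index set is fixed: I_out^{(d)} = I for all d, with |I| = K ∈ ℕ, and assume τ^{(d)}/d → r/K for some r ∈ [0,∞). Then (1/d) ‖X'^{(d)}‖² converges in distribution (indeed almost surely) to (r/K) Σ_{i ∈ I} (z_i')² + σ², i.e. to σ² plus (r/K) times a chi-squared random variable with K degrees of freedom, and (1/d) ‖X^{(d)} − X'^{(d)}‖² converges in distribution (indeed almost surely) to (r/K) Σ_{i ∈ I} (z_i')² + 2σ², as d → ∞. -/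
/-!
Coordinates outside `I` form an i.i.d. sequence: the strong law of large numbers applied to the
pairs `(z i, z' i)` makes the averages of `(σ z'ᵢ)²` and `(σ zᵢ - σ z'ᵢ)²` converge almost surely
to `σ²` and `2σ²`, the latter because `σ z - σ z' ∼ N(0, 2σ²)`. Each of the finitely many
coordinates in `I` contributes `(b - √τ_d a)² / d = (b / √d - √(τ_d / d) a)² → (r / K) a²`,
whether the inlier term is `b = σ zᵢ` or `b = 0`; and changing finitely many terms of a Cesàro
average does not change its limit.
-/

open MeasureTheory ProbabilityTheory Filter Finset
open scoped NNReal Topology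

namespace ProbabilityTheory

section Gaussian

variable {Ω : Type*} {mΩ : MeasurableSpace Ω} {P : Measure Ω} {X Y : Ω → ℝ}

lemma integrable_sq_of_hasLaw_gaussianReal {μ : ℝ} {v : ℝ≥0}
    (hX : HasLaw X (gaussianReal μ v) P) : Integrable (fun ω ↦ X ω ^ 2) P := by
  have h : Integrable (fun x : ℝ ↦ x ^ 2) (gaussianReal μ v) :=
    (memLp_id_gaussianReal 2).integrable_sq
  rw [← hX.map_eq] at h
  exact h.comp_aemeasurable hX.aemeasurable

lemma integral_sq_of_hasLaw_gaussianReal {v : ℝ≥0} (hX : HasLaw X (gaussianReal 0 v) P) :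
    ∫ ω, X ω ^ 2 ∂P = v := by
  have h := hX.integral_comp (f := fun x : ℝ ↦ x ^ 2) (by fun_prop)
  rw [Function.comp_def] at h
  rw [h, ← variance_fun_id_gaussianReal (μ := 0), variance_eq_integral aemeasurable_id']
  simp

lemma IndepFun.hasLaw_sub_gaussianReal {μ₁ μ₂ : ℝ} {v₁ v₂ : ℝ≥0}
    (hX : HasLaw X (gaussianReal μ₁ v₁) P) (hY : HasLaw Y (gaussianReal μ₂ v₂) P)
    (hXY : IndepFun X Y P) :
    HasLaw (fun ω ↦ X ω - Y ω) (gaussianReal (μ₁ - μ₂) (v₁ + v₂)) P := by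
  have h := hXY.comp measurable_id measurable_neg |>.hasLaw_add hX (gaussianReal_neg hY)
  rw [gaussianReal_conv_gaussianReal, ← sub_eq_add_neg, ← sub_eq_add_neg] at h
  exact h

end Gaussian

section StrongLaw

variable {Ω 𝓧 : Type*} {mΩ : MeasurableSpace Ω} {m𝓧 : MeasurableSpace 𝓧} {P : Measure Ω}
  {X Y : ℕ → Ω → 𝓧}

lemma iIndepFun.identDistrib_prodMk [IsFiniteMeasure P] (hindep : iIndepFun (Sum.elim X Y) P)
    (hX : ∀ i, IdentDistrib (X i) (X 0) P P) (hY : ∀ i, IdentDistrib (Y i) (Y 0) P P) (n : ℕ) :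
    IdentDistrib (fun ω ↦ (X n ω, Y n ω)) (fun ω ↦ (X 0 ω, Y 0 ω)) P P where
  aemeasurable_fst := (hX n).aemeasurable_fst.prodMk (hY n).aemeasurable_fst
  aemeasurable_snd := (hX 0).aemeasurable_fst.prodMk (hY 0).aemeasurable_fst
  map_eq := by
    have hprod : ∀ j, P.map (fun ω ↦ (X j ω, Y j ω)) = (P.map (X j)).prod (P.map (Y j)) :=
      fun j ↦ (hindep.indepFun (i := .inl j) (j := .inr j) Sum.inl_ne_inr).map_prod_eq_prod_map_map
        (hX j).aemeasurable_fst (hY j).aemeasurable_fst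
    rw [hprod, hprod, (hX n).map_eq, (hY n).map_eq]

lemma iIndepFun.pairwise_indepFun_prodMk (hindep : iIndepFun (Sum.elim X Y) P)
    (hX : ∀ i, AEMeasurable (X i) P) (hY : ∀ i, AEMeasurable (Y i) P) :
    Pairwise fun i j ↦ IndepFun (fun ω ↦ (X i ω, Y i ω)) (fun ω ↦ (X j ω, Y j ω)) P := by
  intro i j hij
  refine hindep.indepFun_prodMk_prodMk₀ ?_ (.inl i) (.inr i) (.inl j) (.inr j)
    (by simpa using hij) Sum.inl_ne_inr Sum.inr_ne_inl (by simpa using hij)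
  rintro (k | k)
  exacts [hX k, hY k]

theorem iIndepFun.ae_tendsto_average_comp_prodMk [IsFiniteMeasure P]
    (hindep : iIndepFun (Sum.elim X Y) P)
    (hX : ∀ i, IdentDistrib (X i) (X 0) P P) (hY : ∀ i, IdentDistrib (Y i) (Y 0) P P)
    {φ : 𝓧 × 𝓧 → ℝ} (hφ : Measurable φ) (hint : Integrable (fun ω ↦ φ (X 0 ω, Y 0 ω)) P) :
    ∀ᵐ ω ∂P, Tendsto (fun n : ℕ ↦ (∑ i ∈ range n, φ (X i ω, Y i ω)) / n) atTop
      (𝓝 (∫ ω, φ (X 0 ω, Y 0 ω) ∂P)) :=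
  strong_law_ae_real (fun i ω ↦ φ (X i ω, Y i ω)) hint
    (fun _ _ hij ↦ (hindep.pairwise_indepFun_prodMk (fun k ↦ (hX k).aemeasurable_fst)
      (fun k ↦ (hY k).aemeasurable_fst) hij).comp hφ hφ)
    (fun i ↦ (hindep.identDistrib_prodMk hX hY i).comp hφ)

end StrongLaw

end ProbabilityTheory

lemma tendsto_sum_Icc_div_of_tendsto_sum_range_div {G : ℕ → ℝ} {A : ℝ}
    (hG : Tendsto (fun n : ℕ ↦ (∑ i ∈ range n, G i) / n) atTop (𝓝 A)) :
    Tendsto (fun m : ℕ ↦ (∑ i ∈ Icc 1 m, G i) / m) atTop (𝓝 A) := by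
  have hshift : Tendsto (fun m : ℕ ↦ (∑ i ∈ range (m + 1), G i) / (m + 1 : ℝ)) atTop (𝓝 A) := by
    refine (hG.comp (tendsto_add_atTop_nat 1)).congr fun m ↦ ?_
    simp
  have hlim := (hshift.mul (tendsto_one_div_atTop_nhds_zero_nat.const_add 1)).sub
    (tendsto_const_div_atTop_nhds_zero_nat (G 0))
  rw [add_zero, mul_one, sub_zero] at hlim
  refine hlim.congr' ?_
  filter_upwards [eventually_ge_atTop 1] with m hm1
  have hsplit : ∑ i ∈ Icc 1 m, G i = ∑ i ∈ range (m + 1), G i - G 0 := by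
    rw [sum_range_succ', add_sub_cancel_right, ← Ico_add_one_right_eq_Icc, sum_Ico_eq_sum_range]
    simp [add_comm]
  have hm : (m : ℝ) ≠ 0 := by positivity
  rw [hsplit]
  field_simp

lemma tendsto_sum_Icc_div_of_eq_of_notMem {F : ℕ → ℕ → ℝ} {G c : ℕ → ℝ} {A : ℝ} {I : Finset ℕ}
    (hI : ∀ i ∈ I, 1 ≤ i) (hFG : ∀ m, ∀ i ∉ I, F m i = G i)
    (hF : ∀ i ∈ I, Tendsto (fun m : ℕ ↦ F m i / m) atTop (𝓝 (c i)))
    (hG : Tendsto (fun n : ℕ ↦ (∑ i ∈ range n, G i) / n) atTop (𝓝 A)) :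
    Tendsto (fun m : ℕ ↦ (∑ i ∈ Icc 1 m, F m i) / m) atTop (𝓝 (∑ i ∈ I, c i + A)) := by
  have hcorr : Tendsto (fun m : ℕ ↦ ∑ i ∈ I, (F m i / m - G i / m)) atTop (𝓝 (∑ i ∈ I, c i)) := by
    simpa using tendsto_finsetSum I fun i hi ↦
      (hF i hi).sub (tendsto_const_div_atTop_nhds_zero_nat (G i))
  refine (hcorr.add (tendsto_sum_Icc_div_of_tendsto_sum_range_div hG)).congr' ?_
  filter_upwards [eventually_ge_atTop (I.sup id)] with m hm
  have hIm : I ⊆ Icc 1 m := fun i hi ↦ mem_Icc.2 ⟨hI i hi, (le_sup (f := id) hi).trans hm⟩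
  have hsplit : ∑ i ∈ Icc 1 m, F m i = ∑ i ∈ I, (F m i - G i) + ∑ i ∈ Icc 1 m, G i := by
    rw [sum_subset hIm fun i _ hi ↦ by rw [hFG m i hi, sub_self], ← sum_add_distrib]
    simp
  simp only [hsplit, add_div, sum_div, sub_div]

lemma tendsto_sq_sub_sqrt_mul_div {τ : ℕ → ℝ} {c : ℝ} (hc : 0 ≤ c)
    (hτ : Tendsto (fun m : ℕ ↦ τ m / m) atTop (𝓝 c)) (a b : ℝ) :
    Tendsto (fun m : ℕ ↦ (b - √(τ m) * a) ^ 2 / m) atTop (𝓝 (c * a ^ 2)) := by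
  have hsqrt : Tendsto (fun m : ℕ ↦ √(m : ℝ)) atTop atTop :=
    Real.tendsto_sqrt_atTop.comp tendsto_natCast_atTop_atTop
  have hlim := ((tendsto_const_nhds (x := b)).div_atTop hsqrt).sub (hτ.sqrt.mul_const a) |>.pow 2
  rw [zero_sub, neg_sq, mul_pow, Real.sq_sqrt hc] at hlim
  refine hlim.congr' ?_
  filter_upwards [eventually_ge_atTop 1] with m hm1
  have hm : (0 : ℝ) < m := by positivity
  rw [Real.sqrt_div' _ hm.le, div_mul_eq_mul_div, div_sub_div_same, div_pow, Real.sq_sqrt hm.le]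

theorem stmt19_general
    {Ω : Type} [MeasureSpace Ω] [IsProbabilityMeasure (ℙ : Measure Ω)]
    (σ : ℝ)
    (z z' : ℕ → Ω → ℝ)
    (hzmeas : ∀ i, Measurable (z i)) (hzmeas' : ∀ i, Measurable (z' i))
    (hindep : iIndepFun (Sum.elim z z') ℙ)
    (hgauss : ∀ i, Measure.map (z i) ℙ = gaussianReal 0 1)
    (hgauss' : ∀ i, Measure.map (z' i) ℙ = gaussianReal 0 1)
    (I : Finset ℕ) (hI1 : ∀ i ∈ I, 1 ≤ i)
    (KK : ℕ)
    (τ : ℕ → ℝ)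
    (r : ℝ) (hr0 : 0 ≤ r)
    (hτr : Tendsto (fun m => τ m / m) atTop (nhds (r / KK))) :
    ∀ᵐ ω ∂ℙ,
      Tendsto (fun m =>
          (∑ i ∈ Finset.Icc 1 m,
            (if i ∈ I then Real.sqrt (τ m) * z' i ω else σ * z' i ω) ^ 2) / m)
        atTop (nhds (r / KK * ∑ i ∈ I, (z' i ω) ^ 2 + σ ^ 2)) ∧
      Tendsto (fun m =>
          (∑ i ∈ Finset.Icc 1 m,
            (σ * z i ω -
              (if i ∈ I then Real.sqrt (τ m) * z' i ω else σ * z' i ω)) ^ 2) / m)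
        atTop (nhds (r / KK * ∑ i ∈ I, (z' i ω) ^ 2 + 2 * σ ^ 2)) := by
  have hz i : HasLaw (z i) (gaussianReal 0 1) ℙ := ⟨(hzmeas i).aemeasurable, hgauss i⟩
  have hz' i : HasLaw (z' i) (gaussianReal 0 1) ℙ := ⟨(hzmeas' i).aemeasurable, hgauss' i⟩
  have hσz := gaussianReal_const_mul (hz 0) σ
  have hσz' := gaussianReal_const_mul (hz' 0) σ
  rw [mul_zero, mul_one] at hσz hσz'
  have hdiff := ((hindep.indepFun Sum.inl_ne_inr).comp (measurable_const_mul σ)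
    (measurable_const_mul σ)).hasLaw_sub_gaussianReal hσz hσz'
  rw [sub_zero] at hdiff
  have hslln_out := hindep.ae_tendsto_average_comp_prodMk (fun i ↦ (hz i).identDistrib (hz 0))
    (fun i ↦ (hz' i).identDistrib (hz' 0)) (φ := fun p ↦ (σ * p.2) ^ 2) (by fun_prop)
    (integrable_sq_of_hasLaw_gaussianReal hσz')
  have hslln_diff := hindep.ae_tendsto_average_comp_prodMk (fun i ↦ (hz i).identDistrib (hz 0))
    (fun i ↦ (hz' i).identDistrib (hz' 0)) (φ := fun p ↦ (σ * p.1 - σ * p.2) ^ 2) (by fun_prop)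
    (integrable_sq_of_hasLaw_gaussianReal hdiff)
  rw [integral_sq_of_hasLaw_gaussianReal hσz'] at hslln_out
  rw [integral_sq_of_hasLaw_gaussianReal hdiff] at hslln_diff
  have hc : 0 ≤ r / KK := by positivity
  filter_upwards [hslln_out, hslln_diff] with ω hlim_out hlim_diff
  rw [mul_sum]
  constructor
  · refine tendsto_sum_Icc_div_of_eq_of_notMem hI1 (fun m i hi ↦ by rw [if_neg hi])
      (fun i hi ↦ ?_) hlim_out
    simpa [hi] using tendsto_sq_sub_sqrt_mul_div hc hτr (z' i ω) 0
  · refine tendsto_sum_Icc_div_of_eq_of_notMem hI1 (fun m i hi ↦ by rw [if_neg hi])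
      (fun i hi ↦ ?_) ?_
    · simpa [hi] using tendsto_sq_sub_sqrt_mul_div hc hτr (z' i ω) (σ * z i ω)
    · convert hlim_diff using 2
      push_cast
      ring

theorem stmt19
    {Ω : Type} [MeasureSpace Ω] [IsProbabilityMeasure (ℙ : Measure Ω)]
    (σ : ℝ) (hσ : 0 < σ)
    (z z' : ℕ → Ω → ℝ)
    (hzmeas : ∀ i, Measurable (z i)) (hzmeas' : ∀ i, Measurable (z' i))
    (hindep : iIndepFun (Sum.elim z z') ℙ)
    (hgauss : ∀ i, Measure.map (z i) ℙ = gaussianReal 0 1)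
    (hgauss' : ∀ i, Measure.map (z' i) ℙ = gaussianReal 0 1)
    (I : Finset ℕ) (hI1 : ∀ i ∈ I, 1 ≤ i)
    (KK : ℕ) (hKK : I.card = KK) (hKKpos : 0 < KK)
    (τ : ℕ → ℝ) (hτpos : ∀ m, 0 < τ m)
    (r : ℝ) (hr0 : 0 ≤ r)
    (hτr : Tendsto (fun m => τ m / m) atTop (nhds (r / KK))) :
    ∀ᵐ ω ∂ℙ,
      Tendsto (fun m =>
          (∑ i ∈ Finset.Icc 1 m,
            (if i ∈ I then Real.sqrt (τ m) * z' i ω else σ * z' i ω) ^ 2) / m)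
        atTop (nhds (r / KK * ∑ i ∈ I, (z' i ω) ^ 2 + σ ^ 2)) ∧
      Tendsto (fun m =>
          (∑ i ∈ Finset.Icc 1 m,
            (σ * z i ω -
              (if i ∈ I then Real.sqrt (τ m) * z' i ω else σ * z' i ω)) ^ 2) / m)
        atTop (nhds (r / KK * ∑ i ∈ I, (z' i ω) ^ 2 + 2 * σ ^ 2)) :=
  stmt19_general σ z z' hzmeas hzmeas' hindep hgauss hgauss' I hI1 KK τ r hr0 hτr
end
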